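/- Let C be a comparator network on n channels of depth k, and let d ≥ k. There exists a comparator network D such that C;D is a sorting network on n channels of depth d if and only if there exists a comparator network D' such that C^R;D' is a sorting network on n channels of depth d. -/

import Mathlib

namespace SN

open scoped Classical

/-- A comparator on `n` channels: a pair of channels. -/
abbrev Comp (n : ℕ) := Fin n × Fin n

/-- A layer is a finite set of comparators. -/
abbrev Layer (n : ℕ) := Finset (Comp n)

/-- A comparator network is a sequence (list) of layers; its depth is the length. -/
abbrev Net (n : ℕ) := List (Layer n)

/-- Each channel is used by at most one comparator of the layer. -/
def NoOverlap {n : ℕ} (L : Layer n) : Prop :=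
  ∀ c ∈ L, ∀ c' ∈ L, c ≠ c' →
    c.1 ≠ c'.1 ∧ c.1 ≠ c'.2 ∧ c.2 ≠ c'.1 ∧ c.2 ≠ c'.2

/-- A (standard) layer: comparators `(i,j)` with `i < j`, channels pairwise disjoint. -/
def IsLayer {n : ℕ} (L : Layer n) : Prop :=
  (∀ c ∈ L, c.1 < c.2) ∧ NoOverlap L

/-- A generalized layer: comparators `(i,j)` with `i ≠ j` allowed in any order. -/
def IsGenLayer {n : ℕ} (L : Layer n) : Prop :=
  (∀ c ∈ L, c.1 ≠ c.2) ∧ NoOverlap L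

def IsNet {n : ℕ} (C : Net n) : Prop := ∀ L ∈ C, IsLayer L

def IsGenNet {n : ℕ} (C : Net n) : Prop := ∀ L ∈ C, IsGenLayer L

/-- Apply one layer to a Boolean vector: a comparator `(i,j)` puts the min
(`&&`) on channel `i` and the max (`||`) on channel `j`. -/
noncomputable def applyLayer {n : ℕ} (L : Layer n) (x : Fin n → Bool) : Fin n → Bool :=
  fun k =>
    if h1 : ∃ c ∈ L, c.1 = k then x h1.choose.1 && x h1.choose.2
    else if h2 : ∃ c ∈ L, c.2 = k then x h2.choose.1 || x h2.choose.2
    else x k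

/-- Run a comparator network on a Boolean input (layers applied in sequence). -/
noncomputable def run {n : ℕ} (C : Net n) (x : Fin n → Bool) : Fin n → Bool :=
  C.foldl (fun y L => applyLayer L y) x

/-- Ascendingly sorted Boolean vector. -/
def BSorted {n : ℕ} (x : Fin n → Bool) : Prop :=
  ∀ i j : Fin n, i ≤ j → x i ≤ x j

/-- A sorting network: a comparator network sorting every Boolean input. -/
def IsSortingNet {n : ℕ} (C : Net n) : Prop :=
  IsNet C ∧ ∀ x : Fin n → Bool, BSorted (run C x)

/-- The set of outputs of a network on all Boolean inputs. -/
def outputs {n : ℕ} (C : Net n) : Set (Fin n → Bool) := Set.range (run C)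

/-- Apply one layer to a vector of naturals. -/
noncomputable def applyLayerN {n : ℕ} (L : Layer n) (x : Fin n → ℕ) : Fin n → ℕ :=
  fun k =>
    if h1 : ∃ c ∈ L, c.1 = k then min (x h1.choose.1) (x h1.choose.2)
    else if h2 : ∃ c ∈ L, c.2 = k then max (x h2.choose.1) (x h2.choose.2)
    else x k

noncomputable def runN {n : ℕ} (C : Net n) (x : Fin n → ℕ) : Fin n → ℕ :=
  C.foldl (fun y L => applyLayerN L y) x

def NSorted {n : ℕ} (x : Fin n → ℕ) : Prop :=
  ∀ i j : Fin n, i ≤ j → x i ≤ x j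

/-- Permute the coordinates of a Boolean vector by `π` (channel `k`'s value
moves to channel `π k`). -/
def permVec {n : ℕ} (π : Equiv.Perm (Fin n)) (x : Fin n → Bool) : Fin n → Bool :=
  fun i => x (π.symm i)

/-- The image of a set of Boolean vectors under coordinate permutation by `π`. -/
def permSet {n : ℕ} (π : Equiv.Perm (Fin n)) (X : Set (Fin n → Bool)) :
    Set (Fin n → Bool) :=
  permVec π '' X

/-- The image `π(L)` of a layer under a permutation of channels. -/
def permLayer {n : ℕ} (π : Equiv.Perm (Fin n)) (L : Layer n) : Layer n :=
  L.image fun c => (π c.1, π c.2)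

/-- Channel `i` is used by some comparator of the layer `L`. -/
def usedIn {n : ℕ} (L : Layer n) (i : Fin n) : Prop := ∃ c ∈ L, c.1 = i ∨ c.2 = i

/-- Channels `i` and `j` are joined by a comparator of `L`. -/
def Joined {n : ℕ} (L : Layer n) (i j : Fin n) : Prop := (i, j) ∈ L ∨ (j, i) ∈ L

/-- `i` is the smaller channel of some comparator of `L` (a min-channel). -/
def MinChan {n : ℕ} (L : Layer n) (i : Fin n) : Prop := ∃ c ∈ L, c.1 = i

/-- `i` is the larger channel of some comparator of `L` (a max-channel). -/
def MaxChan {n : ℕ} (L : Layer n) (i : Fin n) : Prop := ∃ c ∈ L, c.2 = i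

/-- A two-layer network `[L1, L2]` is redundant if some comparator can be removed
so that the outputs of the result are a permutation of the original outputs. -/
def Redundant {n : ℕ} (L1 L2 : Layer n) : Prop :=
  ∃ π : Equiv.Perm (Fin n),
    (∃ c ∈ L1, outputs [L1.erase c, L2] = permSet π (outputs [L1, L2])) ∨
    (∃ c ∈ L2, outputs [L1, L2.erase c] = permSet π (outputs [L1, L2]))

/-- A two-layer network `[L1, L2]` is saturated if it is non-redundant and no
comparator on two channels unused in the second layer can be added to the second
layer so as to make the output set a proper subset of a permutation of the
original output set. -/
def Saturated {n : ℕ} (L1 L2 : Layer n) : Prop :=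
  ¬ Redundant L1 L2 ∧
  ¬ ∃ (c : Comp n) (π : Equiv.Perm (Fin n)),
      c.1 < c.2 ∧ ¬ usedIn L2 c.1 ∧ ¬ usedIn L2 c.2 ∧
      outputs [L1, insert c L2] ⊂ permSet π (outputs [L1, L2])

/-- Vertices of the graph representation of `C`: the comparators of `C`,
tagged with the index of the layer containing them. -/
def Vertex {n : ℕ} (C : Net n) := {p : ℕ × Comp n // p.2 ∈ C.getD p.1 ∅}

/-- The channel carrying the min output (`b = false`, label 1) or max output
(`b = true`, label 2) of a comparator. -/
def outChan {n : ℕ} (c : Comp n) (b : Bool) : Fin n := if b then c.2 else c.1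

/-- An edge with label `b` (1 for min, 2 for max) from comparator `u` to
comparator `v`: the corresponding output of `u` is an input of `v`, i.e. `v`
is the next comparator on that channel. -/
def Edge {n : ℕ} (C : Net n) (b : Bool) (u v : ℕ × Comp n) : Prop :=
  u.1 < v.1 ∧ (outChan u.2 b = v.2.1 ∨ outChan u.2 b = v.2.2) ∧
  ∀ m, u.1 < m → m < v.1 → ¬ usedIn (C.getD m ∅) (outChan u.2 b)

/-- The graph representations of `C` and `D` are isomorphic: a bijection of
comparators preserving the labeled edges. -/
def GraphIso {n m : ℕ} (C : Net n) (D : Net m) : Prop :=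
  ∃ f : Vertex C ≃ Vertex D,
    ∀ (b : Bool) (u v : Vertex C),
      Edge C b u.val v.val ↔ Edge D b (f u).val (f v).val

/-- The graph representation of `C` is connected. -/
def GraphConnected {n : ℕ} (C : Net n) : Prop :=
  ∀ u v : Vertex C,
    Relation.ReflTransGen
      (fun a b : Vertex C => ∃ ℓ : Bool, Edge C ℓ a.val b.val ∨ Edge C ℓ b.val a.val) u v

/-- Reflection of a comparator: `(i,j) ↦ (n-j+1, n-i+1)` (in 1-based terms). -/
def reflectComp {n : ℕ} (c : Comp n) : Comp n := (c.2.rev, c.1.rev)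

def reflectLayer {n : ℕ} (L : Layer n) : Layer n := L.image reflectComp

/-- Reflection `C^R` of a comparator network. -/
def reflect {n : ℕ} (C : Net n) : Net n := C.map reflectLayer

/-- The first layer `F_n = {(2i-1, 2i) : 1 ≤ i ≤ ⌊n/2⌋}` (0-indexed: `(2i, 2i+1)`). -/
def FLayer (n : ℕ) : Layer n :=
  Finset.univ.filter fun c : Comp n => c.1.val % 2 = 0 ∧ c.2.val = c.1.val + 1

/-- The two-layer networks with first layer `F_n`, parametrized by second layer. -/
def SecondLayers (n : ℕ) := {L : Layer n // IsLayer L}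

/-- The number `|R(G_n)|` of equivalence classes of two-layer networks with
first layer `F_n`, under graph isomorphism `≈`. -/
noncomputable def numClasses (n : ℕ) : ℕ :=
  Nat.card (Quot fun L L' : SecondLayers n =>
    GraphIso ([FLayer n, L.val] : Net n) ([FLayer n, L'.val] : Net n))

/-- Redundant two-layer networks with first layer `F_n`. -/
def RedLayers (n : ℕ) := {L : Layer n // IsLayer L ∧ Redundant (FLayer n) L}

/-- The number of equivalence classes of redundant two-layer networks with
first layer `F_n`, under graph isomorphism `≈`. -/
noncomputable def numRedClasses (n : ℕ) : ℕ :=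
  Nat.card (Quot fun L L' : RedLayers n =>
    GraphIso ([FLayer n, L.val] : Net n) ([FLayer n, L'.val] : Net n))

/-!
Reversing the channel order and complementing every bit (`x ↦ dual x`) turns a comparator
`(i, j)` into its reflection: the minimum `x i && x j` on channel `i` becomes the maximum
`!x i || !x j` on channel `rev i`, which is the second channel of the reflected comparator.
Hence `C^R` computes `dual ∘ C ∘ dual`, and since `dual` preserves sortedness, `C^R` sorts
whenever `C` does. As `(C ; D)^R = C^R ; D^R` and reflection is an involution preserving depth,
an extension `D` of `C` yields the extension `D^R` of `C^R`, and conversely.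
-/

section

variable {n : ℕ}

section Reflection

theorem reflectComp_involutive : Function.Involutive (reflectComp : Comp n → Comp n) :=
  fun c => by simp [reflectComp]

theorem reflectLayer_involutive : Function.Involutive (reflectLayer : Layer n → Layer n) :=
  fun L => by
    rw [reflectLayer, reflectLayer, Finset.image_image, reflectComp_involutive.comp_self,
      Finset.image_id]

theorem reflect_reflect (C : Net n) : reflect (reflect C) = C := by
  rw [reflect, reflect, List.map_map, reflectLayer_involutive.comp_self, List.map_id]

theorem reflect_append (C D : Net n) : reflect (C ++ D) = reflect C ++ reflect D :=
  List.map_append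

theorem length_reflect (C : Net n) : (reflect C).length = C.length :=
  List.length_map _

theorem mem_reflectLayer {L : Layer n} {c : Comp n} (hc : c ∈ L) :
    reflectComp c ∈ reflectLayer L :=
  Finset.mem_image_of_mem _ hc

theorem usedIn_reflectLayer {L : Layer n} {i : Fin n} :
    usedIn (reflectLayer L) i ↔ usedIn L i.rev := by
  simp only [usedIn, reflectLayer, Finset.mem_image, reflectComp]
  constructor
  · rintro ⟨_, ⟨c, hc, rfl⟩, h | h⟩
    · exact ⟨c, hc, Or.inr (by rw [← h, Fin.rev_rev])⟩
    · exact ⟨c, hc, Or.inl (by rw [← h, Fin.rev_rev])⟩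
  · rintro ⟨c, hc, h | h⟩
    · exact ⟨_, ⟨c, hc, rfl⟩, Or.inr (by rw [h, Fin.rev_rev])⟩
    · exact ⟨_, ⟨c, hc, rfl⟩, Or.inl (by rw [h, Fin.rev_rev])⟩

theorem IsLayer.isGenLayer {L : Layer n} (hL : IsLayer L) : IsGenLayer L :=
  ⟨fun c hc => (hL.1 c hc).ne, hL.2⟩

theorem IsGenLayer.reflectLayer {L : Layer n} (hL : IsGenLayer L) :
    IsGenLayer (reflectLayer L) := by
  simp only [IsGenLayer, NoOverlap, SN.reflectLayer, Finset.forall_mem_image]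
  refine ⟨fun c hc h => hL.1 c hc (Fin.rev_injective h).symm, ?_⟩
  intro c hc c' hc' hne
  have := hL.2 c hc c' hc' (ne_of_apply_ne _ hne)
  simp only [reflectComp, ne_eq, Fin.rev_inj]
  tauto

theorem IsLayer.reflectLayer {L : Layer n} (hL : IsLayer L) : IsLayer (reflectLayer L) := by
  refine ⟨?_, hL.isGenLayer.reflectLayer.2⟩
  simp only [SN.reflectLayer, Finset.forall_mem_image]
  exact fun c hc => Fin.rev_lt_rev.mpr (hL.1 c hc)

theorem IsNet.reflect {C : Net n} (hC : IsNet C) : IsNet (reflect C) := by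
  simp only [SN.reflect, IsNet, List.forall_mem_map]
  exact fun L hL => (hC L hL).reflectLayer

end Reflection

section ApplyLayer

variable {L : Layer n} {c : Comp n}

theorem applyLayer_fst (hL : IsGenLayer L) (hc : c ∈ L) (x : Fin n → Bool) :
    applyLayer L x c.1 = (x c.1 && x c.2) := by
  have h : ∃ c' ∈ L, c'.1 = c.1 := ⟨c, hc, rfl⟩
  have hc' : h.choose = c := by
    by_contra hne
    exact (hL.2 _ h.choose_spec.1 c hc hne).1 h.choose_spec.2
  simp only [applyLayer, dif_pos h, hc']

theorem applyLayer_snd (hL : IsGenLayer L) (hc : c ∈ L) (x : Fin n → Bool) :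
    applyLayer L x c.2 = (x c.1 || x c.2) := by
  have hfst : ¬ ∃ c' ∈ L, c'.1 = c.2 := by
    rintro ⟨c', hc', h⟩
    by_cases hne : c' = c
    · exact hL.1 c hc (hne ▸ h)
    · exact (hL.2 c' hc' c hc hne).2.1 h
  have h : ∃ c' ∈ L, c'.2 = c.2 := ⟨c, hc, rfl⟩
  have hc' : h.choose = c := by
    by_contra hne
    exact (hL.2 _ h.choose_spec.1 c hc hne).2.2.2 h.choose_spec.2
  simp only [applyLayer, dif_neg hfst, dif_pos h, hc']

theorem applyLayer_of_not_usedIn {i : Fin n} (h : ¬ usedIn L i) (x : Fin n → Bool) :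
    applyLayer L x i = x i := by
  have hfst : ¬ ∃ c ∈ L, c.1 = i := fun ⟨c, hc, hi⟩ => h ⟨c, hc, Or.inl hi⟩
  have hsnd : ¬ ∃ c ∈ L, c.2 = i := fun ⟨c, hc, hi⟩ => h ⟨c, hc, Or.inr hi⟩
  simp only [applyLayer, dif_neg hfst, dif_neg hsnd]

end ApplyLayer

section Duality

def dual (x : Fin n → Bool) : Fin n → Bool := fun i => !x i.rev

theorem dual_dual (x : Fin n → Bool) : dual (dual x) = x := by
  funext i
  simp [dual]

theorem BSorted.dual {x : Fin n → Bool} (hx : BSorted x) : BSorted (dual x) := by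
  intro i j hij
  have := hx j.rev i.rev (Fin.rev_le_rev.mpr hij)
  revert this
  simp only [SN.dual]
  cases x i.rev <;> cases x j.rev <;> decide

theorem applyLayer_reflectLayer_dual {L : Layer n} (hL : IsGenLayer L) (x : Fin n → Bool) :
    applyLayer (reflectLayer L) (dual x) = dual (applyLayer L x) := by
  have hL' := hL.reflectLayer
  funext i
  by_cases hu : usedIn L i.rev
  · obtain ⟨c, hc, hi | hi⟩ := hu
    · obtain rfl : i = (reflectComp c).2 := by simp [reflectComp, hi]
      rw [applyLayer_snd hL' (mem_reflectLayer hc)]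
      simp [dual, reflectComp, applyLayer_fst hL hc, Bool.or_comm]
    · obtain rfl : i = (reflectComp c).1 := by simp [reflectComp, hi]
      rw [applyLayer_fst hL' (mem_reflectLayer hc)]
      simp [dual, reflectComp, applyLayer_snd hL hc, Bool.and_comm]
  · rw [applyLayer_of_not_usedIn (usedIn_reflectLayer.not.mpr hu)]
    simp [dual, applyLayer_of_not_usedIn hu]

theorem run_reflect_dual {C : Net n} (hC : IsGenNet C) (x : Fin n → Bool) :
    run (reflect C) (dual x) = dual (run C x) := by
  induction C generalizing x with
  | nil => rfl
  | cons L C ih =>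
    simp only [run, reflect, List.map_cons, List.foldl_cons] at ih ⊢
    rw [applyLayer_reflectLayer_dual (hC L List.mem_cons_self),
      ih (fun M hM => hC M (List.mem_cons_of_mem L hM))]

end Duality

theorem IsSortingNet.reflect {C : Net n} (hC : IsSortingNet C) : IsSortingNet (reflect C) := by
  refine ⟨hC.1.reflect, fun x => ?_⟩
  rw [← dual_dual x, run_reflect_dual (fun L hL => (hC.1 L hL).isGenLayer)]
  exact (hC.2 (dual x)).dual

def ExtendsToSortingNet (C : Net n) (d : ℕ) : Prop :=
  ∃ D : Net n, (C ++ D).length = d ∧ IsSortingNet (C ++ D)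

theorem ExtendsToSortingNet.reflect {C : Net n} {d : ℕ} (h : ExtendsToSortingNet C d) :
    ExtendsToSortingNet (reflect C) d := by
  obtain ⟨D, hlen, hsort⟩ := h
  refine ⟨SN.reflect D, ?_, ?_⟩ <;> rw [← reflect_append]
  · rwa [length_reflect]
  · exact hsort.reflect

end

theorem reflection_extends_general {n d : ℕ} (C : Net n) :
    (∃ D : Net n, (C ++ D).length = d ∧ IsSortingNet (C ++ D)) ↔
    (∃ D' : Net n, (reflect C ++ D').length = d ∧
      IsSortingNet (reflect C ++ D')) :=
  ⟨ExtendsToSortingNet.reflect, fun h => reflect_reflect C ▸ ExtendsToSortingNet.reflect h⟩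

/-- `C` extends to a sorting network of depth d iff its
reflection `C^R` does. -/
theorem reflection_extends {n k d : ℕ} (C : Net n) (hC : IsNet C)
    (hk : C.length = k) (hkd : k ≤ d) :
    (∃ D : Net n, (C ++ D).length = d ∧ IsSortingNet (C ++ D)) ↔
    (∃ D' : Net n, (reflect C ++ D').length = d ∧
      IsSortingNet (reflect C ++ D')) :=
  reflection_extends_general C

end SN
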